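/- arXiv:2009.00265 — 11 statements merged into one kernel-verified Lean document; each statement's English description precedes it below -/
import Mathlib

section
/- For all points x, y in the unit disk of the complex plane, the triangular ratio metric satisfies s(x,y) ≤ |x−y|/(2−|x+y|), i.e. |x−y|·(2−|x+y|)⁻¹ is an upper bound for |x−y|/inf_{|z|=1}(|x−z|+|z−y|). -/
open Complex

/-- Triangular ratio "metric" of the unit disk. -/
noncomputable def sB (x y : ℂ) : ℝ :=
  ‖x - y‖ /
    sInf ((fun z => ‖x - z‖ + ‖z - y‖) '' {z : ℂ | ‖z‖ = 1})

/-! For `‖z‖ = 1` the triangle inequality gives `2 = ‖2z‖ ≤ ‖x + y‖ + ‖x - z‖ + ‖z - y‖`, so every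
sum `‖x - z‖ + ‖z - y‖` in the infimum defining `sB x y` is at least `2 - ‖x + y‖`, which is
positive inside the unit disk. -/

section NormedSpace

variable {E : Type*} [SeminormedAddCommGroup E] [NormedSpace ℝ E]

theorem two_mul_norm_sub_norm_add_le (x y z : E) :
    2 * ‖z‖ - ‖x + y‖ ≤ ‖x - z‖ + ‖z - y‖ := by
  have h : 2 * ‖z‖ ≤ ‖x + y‖ + ‖x - z‖ + ‖z - y‖ :=
    calc 2 * ‖z‖ = ‖(x + y) + -(x - z) + (z - y)‖ := by
          rw [← Real.norm_two, ← norm_smul, two_smul]; congr 1; abel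
      _ ≤ ‖x + y‖ + ‖-(x - z)‖ + ‖z - y‖ := norm_add₃_le
      _ = ‖x + y‖ + ‖x - z‖ + ‖z - y‖ := by rw [norm_neg]
  linarith

theorem two_sub_norm_add_le_sInf_unitSphere [NontrivialTopology E] (x y : E) :
    2 - ‖x + y‖ ≤ sInf ((fun z => ‖x - z‖ + ‖z - y‖) '' {z : E | ‖z‖ = 1}) := by
  obtain ⟨z₀, hz₀⟩ := exists_norm_eq E zero_le_one
  refine le_csInf ⟨_, z₀, hz₀, rfl⟩ ?_
  rintro _ ⟨z, hz : ‖z‖ = 1, rfl⟩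
  simpa [hz] using two_mul_norm_sub_norm_add_le x y z

end NormedSpace

theorem stmt_0 (x y : ℂ) (hx : ‖x‖ < 1) (hy : ‖y‖ < 1) :
    sB x y ≤ ‖x - y‖ / (2 - ‖x + y‖) := by
  have hpos : 0 < 2 - ‖x + y‖ := by linarith [norm_add_le x y]
  exact div_le_div_of_nonneg_left (norm_nonneg _) hpos (two_sub_norm_add_le_sInf_unitSphere x y)
end

section
/- Let G ⊊ ℝⁿ be a starlike domain with respect to x ∈ G, and let y ∈ G with d(x,∂G) + d(y,∂G) ≤ |x−y|. Then s_G(x,y) ≤ |x−y| / (d_G(x) + sqrt(|x−y|² + d_G(x)² − 2·d_G(x)·sqrt(|x−y|² − d_G(y)²))). -/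
open Metric
open scoped RealInnerProductSpace

/-- Triangular ratio metric of a domain `G`. -/
noncomputable def sG {n : ℕ} (G : Set (EuclideanSpace ℝ (Fin n))) (x y : EuclideanSpace ℝ (Fin n)) : ℝ :=
  dist x y / sInf ((fun z => dist x z + dist z y) '' frontier G)

/-- Euclidean distance to the boundary. -/
noncomputable def dG {n : ℕ} (G : Set (EuclideanSpace ℝ (Fin n))) (x : EuclideanSpace ℝ (Fin n)) : ℝ :=
  Metric.infDist x (frontier G)

/-- A segment from a point of an open set to a point outside meets the frontier at
distance at most `dist y w`. -/
lemma seg_hits_frontier {E : Type*} [NormedAddCommGroup E] [NormedSpace ℝ E]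
    {G : Set E} (hG : IsOpen G) {y w : E} (hy : y ∈ G) (hw : w ∉ G) :
    ∃ z ∈ frontier G, dist y z ≤ dist y w := by
  set f : ℝ → E := fun t => y + t • (w - y) with hf
  have hfc : Continuous f := by fun_prop
  set K : Set ℝ := Set.Icc (0:ℝ) 1 ∩ f ⁻¹' Gᶜ with hK
  have hKc : IsClosed K := isClosed_Icc.inter (hG.isClosed_compl.preimage hfc)
  have h1K : (1:ℝ) ∈ K := by
    constructor
    · exact ⟨zero_le_one, le_refl 1⟩
    · simp only [Set.mem_preimage, hf]
      simpa using hw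
  have hbdd : BddBelow K := ⟨0, fun t ht => ht.1.1⟩
  set τ := sInf K with hτ
  have hτK : τ ∈ K := hKc.csInf_mem ⟨1, h1K⟩ hbdd
  have hτ0 : 0 ≤ τ := hτK.1.1
  have hτ1 : τ ≤ 1 := hτK.1.2
  have hτne : τ ≠ 0 := by
    intro h
    have : f τ ∉ G := hτK.2
    rw [h] at this
    simp [hf] at this
    exact this hy
  have hτpos : 0 < τ := lt_of_le_of_ne hτ0 (Ne.symm hτne)
  have hIco : ∀ t ∈ Set.Ico (0:ℝ) τ, f t ∈ G := by
    intro t ht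
    by_contra hc
    have : t ∈ K := ⟨⟨ht.1, le_trans ht.2.le hτ1⟩, hc⟩
    exact absurd (csInf_le hbdd this) (not_le.2 ht.2)
  have hcl : f τ ∈ closure G := by
    have htend : Filter.Tendsto f (nhdsWithin τ (Set.Iio τ)) (nhds (f τ)) :=
      (hfc.tendsto τ).mono_left nhdsWithin_le_nhds
    apply mem_closure_of_tendsto htend
    filter_upwards [Ico_mem_nhdsLT_of_mem ⟨hτpos, le_refl τ⟩] with t ht
    exact hIco t ht
  refine ⟨f τ, ?_, ?_⟩
  · rw [frontier_eq_closure_inter_closure]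
    exact ⟨hcl, subset_closure hτK.2⟩
  · have : dist y (f τ) = τ * dist y w := by
      simp only [hf, dist_eq_norm]
      have heq : y - (y + τ • (w - y)) = τ • (y - w) := by module
      rw [heq, norm_smul, Real.norm_eq_abs, abs_of_nonneg hτ0]
    rw [this]
    nlinarith [dist_nonneg (x := y) (y := w)]

lemma core_ineq (a b c p q m : ℝ) (ha : 0 < a) (hb : 0 < b)
    (hp : 0 ≤ p) (hpa : p ≤ a) (hq : 0 ≤ q) (hqb : q ≤ b)
    (hpq : p + q ≤ c) (hc2 : c^2 = a^2 + b^2 - 2*m)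
    (hcase : 0 ≤ m ∨ m^2 ≤ a^2*(b^2 - q^2)) :
    p + Real.sqrt (c^2 + p^2 - 2*p*Real.sqrt (c^2 - q^2)) ≤ a + b := by
  have hc0 : 0 ≤ c := le_trans (by linarith) hpq
  set s := Real.sqrt (c^2 - q^2) with hs
  have hs0 : 0 ≤ s := Real.sqrt_nonneg _
  have hs2 : s^2 = c^2 - q^2 := Real.sq_sqrt (by nlinarith)
  have hW : 0 ≤ a*b + m + p*s - p*a - p*b := by
    rcases hcase with hm | hm2
    · have hsp : p ≤ s := by nlinarith [sq_nonneg (s - p), sq_nonneg (s + p)]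
      have key : 2*(a*b + m + p*s - p*a - p*b)*(a+b+s) =
          2*a*b*(a+b+s-2*p-q) + 2*q*(a*b-p*q) + 2*m*(a+b+s-2*p) := by
        linear_combination (2*p) * hs2 + (2*p) * hc2
      nlinarith [mul_nonneg (mul_nonneg ha.le hb.le) (by linarith : (0:ℝ) ≤ a+b+s-2*p-q),
        mul_nonneg hq (by nlinarith : (0:ℝ) ≤ a*b - p*q),
        mul_nonneg hm (by linarith : (0:ℝ) ≤ a+b+s-2*p)]
    · have has : (a*s)^2 = a^2*(c^2 - q^2) := by rw [mul_pow, hs2]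
      have h1 : a^2 - m ≤ a*s := by
        nlinarith [has, hm2, hc2, mul_nonneg ha.le hs0]
      have hmab : -(a*b) ≤ m := by nlinarith [hm2, mul_pos ha hb, sq_nonneg (a*q)]
      have h2 : 0 ≤ (a-p)*(a*b+m) := mul_nonneg (by linarith) (by linarith)
      have key : a*(a*b + m + p*s - p*a - p*b) = p*(a*s - (a^2 - m)) + (a-p)*(a*b+m) := by
        ring
      nlinarith [mul_nonneg hp (by linarith : (0:ℝ) ≤ a*s - (a^2-m))]
  have habp : 0 ≤ a + b - p := by linarith
  have hle : c^2 + p^2 - 2*p*s ≤ (a+b-p)^2 := by nlinarith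
  calc p + Real.sqrt (c^2 + p^2 - 2*p*s) ≤ p + Real.sqrt ((a+b-p)^2) := by
        gcongr
    _ = a + b := by rw [Real.sqrt_sq habp]; ring

lemma per_z {n : ℕ} {G : Set (EuclideanSpace ℝ (Fin n))} {x y z : EuclideanSpace ℝ (Fin n)}
    (hG_open : IsOpen G) (hx : x ∈ G) (hy : y ∈ G)
    (hstar : ∀ u ∈ G, segment ℝ x u ⊆ G) (hz : z ∈ frontier G)
    (hp_pos : 0 < dG G x) (hq_pos : 0 < dG G y)
    (hdist : dG G x + dG G y ≤ dist x y) :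
    dG G x + Real.sqrt ((dist x y)^2 + (dG G x)^2 -
      2*(dG G x)*Real.sqrt ((dist x y)^2 - (dG G y)^2)) ≤ dist x z + dist z y := by
  set p := dG G x
  set q := dG G y
  set a := dist x z with hadef
  set b := dist z y with hbdef
  set c := dist x y with hcdef
  set m : ℝ := ⟪x - z, y - z⟫ with hmdef
  have hpa : p ≤ a := Metric.infDist_le_dist_of_mem hz
  have hqb : q ≤ b := by
    have := Metric.infDist_le_dist_of_mem (x := y) hz
    rwa [dist_comm] at this
  have ha_pos : 0 < a := lt_of_lt_of_le hp_pos hpa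
  have hb_pos : 0 < b := lt_of_lt_of_le hq_pos hqb
  have hc2 : c^2 = a^2 + b^2 - 2*m := by
    have hxy : x - y = (x - z) - (y - z) := by abel
    rw [hcdef, hadef, hbdef, dist_eq_norm x y, dist_eq_norm x z, dist_eq_norm z y, hxy,
      norm_sub_sq_real, norm_sub_rev z y]
    ring
  -- points on the ray beyond z are outside G
  have hray : ∀ s : ℝ, 0 ≤ s → z + s • (z - x) ∉ G := by
    intro s hs hmem
    have hzG : z ∉ G := by
      rw [hG_open.frontier_eq] at hz; exact hz.2
    apply hzG
    apply hstar _ hmem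
    have h1s : (0:ℝ) < 1 + s := by linarith
    refine ⟨s/(1+s), 1/(1+s), by positivity, by positivity, by field_simp; ring, ?_⟩
    match_scalars <;> (field_simp; try ring)
  have hqout : ∀ w : EuclideanSpace ℝ (Fin n), w ∉ G → q ≤ dist y w := by
    intro w hw
    obtain ⟨z', hz', hle⟩ := seg_hits_frontier hG_open hy hw
    exact le_trans (Metric.infDist_le_dist_of_mem hz') hle
  rcases le_or_gt 0 m with hm | hm
  · exact core_ineq a b c p q m ha_pos hb_pos hp_pos.le hpa hq_pos.le hqb hdist hc2 (Or.inl hm)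
  · -- m < 0 : use the projection onto the ray
    set t : ℝ := -m / a^2 with htdef
    have ht0 : 0 ≤ t := div_nonneg (by linarith) (by positivity)
    have hna : ‖z - x‖ = a := by rw [hadef, dist_eq_norm, norm_sub_rev]
    have hnb : ‖y - z‖ = b := by rw [hbdef, dist_eq_norm, norm_sub_rev]
    have hinner : ⟪y - z, z - x⟫ = -m := by
      have h1 : z - x = -(x - z) := by abel
      rw [h1, inner_neg_right, real_inner_comm, ← hmdef]
    have hww : y - (z + t • (z - x)) = (y - z) - t • (z - x) := by module
    have hdw : (dist y (z + t • (z - x)))^2 = b^2 + 2*t*m + t^2*a^2 := by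
      rw [dist_eq_norm, hww, norm_sub_sq_real, real_inner_smul_right, hinner, norm_smul,
        hnb, hna, Real.norm_eq_abs, mul_pow, sq_abs]
      ring
    have hqw : q ≤ dist y (z + t • (z - x)) := hqout _ (hray t ht0)
    have hq2 : q^2 ≤ b^2 + 2*t*m + t^2*a^2 := by
      rw [← hdw]; exact pow_le_pow_left₀ hq_pos.le hqw 2
    have hsub : b^2 + 2*t*m + t^2*a^2 = b^2 - m^2/a^2 := by
      rw [htdef]; field_simp; ring
    have h3 : m^2/a^2 ≤ b^2 - q^2 := by
      rw [hsub] at hq2; linarith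
    have hm2 : m^2 ≤ a^2*(b^2 - q^2) := by
      rw [mul_comm]
      exact (div_le_iff₀ (by positivity : (0:ℝ) < a^2)).mp h3
    exact core_ineq a b c p q m ha_pos hb_pos hp_pos.le hpa hq_pos.le hqb hdist hc2 (Or.inr hm2)

theorem stmt_1 {n : ℕ} (G : Set (EuclideanSpace ℝ (Fin n)))
    (hG_open : IsOpen G) (hG_ne : G.Nonempty) (hG_proper : G ≠ Set.univ)
    (hG_conn : IsConnected G)
    (x : EuclideanSpace ℝ (Fin n)) (hx : x ∈ G)
    (hstar : ∀ u ∈ G, segment ℝ x u ⊆ G)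
    (y : EuclideanSpace ℝ (Fin n)) (hy : y ∈ G)
    (hdist : dG G x + dG G y ≤ dist x y) :
    sG G x y ≤ dist x y /
      (dG G x + Real.sqrt (dist x y ^ 2 + dG G x ^ 2 -
        2 * dG G x * Real.sqrt (dist x y ^ 2 - dG G y ^ 2))) := by
  have hfr : (frontier G).Nonempty := nonempty_frontier_iff.2 ⟨hG_ne, hG_proper⟩
  have hxf : x ∉ frontier G := by rw [hG_open.frontier_eq]; exact fun h => h.2 hx
  have hyf : y ∉ frontier G := by rw [hG_open.frontier_eq]; exact fun h => h.2 hy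
  have hp_pos : 0 < dG G x := (isClosed_frontier.notMem_iff_infDist_pos hfr).1 hxf
  have hq_pos : 0 < dG G y := (isClosed_frontier.notMem_iff_infDist_pos hfr).1 hyf
  have hc_pos : 0 < dist x y := lt_of_lt_of_le (by linarith) hdist
  have hB_pos : 0 < dG G x + Real.sqrt (dist x y ^ 2 + dG G x ^ 2 -
      2 * dG G x * Real.sqrt (dist x y ^ 2 - dG G y ^ 2)) :=
    add_pos_of_pos_of_nonneg hp_pos (Real.sqrt_nonneg _)
  have hBI : dG G x + Real.sqrt (dist x y ^ 2 + dG G x ^ 2 -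
      2 * dG G x * Real.sqrt (dist x y ^ 2 - dG G y ^ 2)) ≤
      sInf ((fun z => dist x z + dist z y) '' frontier G) := by
    apply le_csInf (hfr.image _)
    rintro v ⟨z, hz, rfl⟩
    have := per_z hG_open hx hy hstar hz hp_pos hq_pos hdist
    convert this using 3 <;> ring
  rw [sG]
  exact div_le_div_of_nonneg_left hc_pos.le hB_pos hBI
end

section
/- For all x, y in the unit disk B² ⊂ ℂ, the Barrlund metric with p = 2 satisfies b_{B²,2}(x,y) = |x−y| / sqrt(2 + |x|² + |y|² − 2|x+y|). -/
/-!
For `‖z‖ = 1` the denominator is `‖x - z‖² + ‖z - y‖² = 2 + ‖x‖² + ‖y‖² - 2⟪x + y, z⟫`, so the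
supremum is attained where `⟪x + y, z⟫` is largest. By Cauchy–Schwarz that is `z = (x + y)/‖x + y‖`
(any unit vector if `x + y = 0`), where `⟪x + y, z⟫ = ‖x + y‖`.
-/

/-- Barrlund metric with parameter 2 of the unit disk. -/
noncomputable def bB2 (x y : ℂ) : ℝ :=
  sSup ((fun z => ‖x - y‖ /
    Real.sqrt (‖x - z‖ ^ 2 + ‖z - y‖ ^ 2)) '' {z : ℂ | ‖z‖ = 1})

open Metric RealInnerProductSpace

section InnerProductSpace

variable {E : Type*} [NormedAddCommGroup E] [InnerProductSpace ℝ E]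

lemma norm_sub_sq_add_norm_sub_sq (x y z : E) :
    ‖x - z‖ ^ 2 + ‖z - y‖ ^ 2 = ‖x‖ ^ 2 + ‖y‖ ^ 2 + 2 * ‖z‖ ^ 2 - 2 * ⟪x + y, z⟫ := by
  rw [norm_sub_sq_real, norm_sub_sq_real, inner_add_left, real_inner_comm z y]
  ring

lemma exists_norm_eq_one_inner_eq_norm [Nontrivial E] (w : E) :
    ∃ z : E, ‖z‖ = 1 ∧ ⟪w, z⟫ = ‖w‖ := by
  rcases eq_or_ne w 0 with rfl | hw
  · obtain ⟨z, hz⟩ := exists_norm_eq E zero_le_one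
    exact ⟨z, hz, by simp⟩
  · have hw' : ‖w‖ ≠ 0 := norm_ne_zero_iff.mpr hw
    refine ⟨‖w‖⁻¹ • w, ?_, ?_⟩
    · rw [norm_smul, norm_inv, norm_norm, inv_mul_cancel₀ hw']
    · rw [real_inner_smul_right, real_inner_self_eq_norm_sq]
      field_simp

lemma isLeast_norm_sub_sq_add_norm_sub_sq_sphere [Nontrivial E] (x y : E) :
    IsLeast ((fun z => ‖x - z‖ ^ 2 + ‖z - y‖ ^ 2) '' sphere 0 1)
      (2 + ‖x‖ ^ 2 + ‖y‖ ^ 2 - 2 * ‖x + y‖) := by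
  have on_sphere : ∀ z ∈ sphere (0 : E) 1,
      ‖x - z‖ ^ 2 + ‖z - y‖ ^ 2 = 2 + ‖x‖ ^ 2 + ‖y‖ ^ 2 - 2 * ⟪x + y, z⟫ := by
    intro z hz
    rw [norm_sub_sq_add_norm_sub_sq, mem_sphere_zero_iff_norm.mp hz]
    ring
  constructor
  · obtain ⟨z, hz_norm, hinner⟩ := exists_norm_eq_one_inner_eq_norm (x + y)
    have hz : z ∈ sphere (0 : E) 1 := mem_sphere_zero_iff_norm.mpr hz_norm
    exact ⟨z, hz, by simp only [on_sphere z hz, hinner]⟩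
  · rintro _ ⟨z, hz, rfl⟩
    have cauchy_schwarz : ⟪x + y, z⟫ ≤ ‖x + y‖ := by
      simpa [mem_sphere_zero_iff_norm.mp hz] using real_inner_le_norm (x + y) z
    simp only [on_sphere z hz]
    linarith

end InnerProductSpace

lemma IsLeast.isGreatest_div_sqrt_image {S : Set ℝ} {m : ℝ} (hS : IsLeast S m) (hm : 0 < m)
    {c : ℝ} (hc : 0 ≤ c) : IsGreatest ((fun t => c / Real.sqrt t) '' S) (c / Real.sqrt m) := by
  have antitone : AntitoneOn (fun t => c / Real.sqrt t) S := by
    intro s hs t _ hst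
    have hs : 0 < s := hm.trans_le (hS.2 hs)
    dsimp only
    gcongr
  exact antitone.map_isLeast hS

theorem stmt_2 (x y : ℂ) (hx : ‖x‖ < 1) (hy : ‖y‖ < 1) :
    bB2 x y = ‖x - y‖ /
      Real.sqrt (2 + ‖x‖ ^ 2 + ‖y‖ ^ 2 - 2 * ‖x + y‖) := by
  -- the denominator is at least `(1 - ‖x‖)² + (1 - ‖y‖)²`
  have hpos : 0 < 2 + ‖x‖ ^ 2 + ‖y‖ ^ 2 - 2 * ‖x + y‖ := by
    nlinarith [norm_add_le x y, norm_nonneg x, norm_nonneg y]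
  have hsphere : {z : ℂ | ‖z‖ = 1} = sphere 0 1 := Set.ext fun z => by simp
  have hgreatest := (isLeast_norm_sub_sq_add_norm_sub_sq_sphere x y).isGreatest_div_sqrt_image
    hpos (norm_nonneg (x - y))
  rw [Set.image_image] at hgreatest
  rw [bB2, hsphere, hgreatest.csSup_eq]
end

section
/- The function f(h) = (1+h²)/(4h² − 4h + 2) on [0,1) attains its maximum value at h = (√5 − 1)/2, and the maximum of sqrt(f(h)) equals (√10 + √2)/4. -/
theorem stmt_6 :
    (∀ h ∈ Set.Ico (0 : ℝ) 1,
        (1 + h ^ 2) / (4 * h ^ 2 - 4 * h + 2) ≤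
          (1 + ((Real.sqrt 5 - 1) / 2) ^ 2) /
            (4 * ((Real.sqrt 5 - 1) / 2) ^ 2 - 4 * ((Real.sqrt 5 - 1) / 2) + 2)) ∧
      Real.sqrt ((1 + ((Real.sqrt 5 - 1) / 2) ^ 2) /
          (4 * ((Real.sqrt 5 - 1) / 2) ^ 2 - 4 * ((Real.sqrt 5 - 1) / 2) + 2)) =
        (Real.sqrt 10 + Real.sqrt 2) / 4 := by
  have h5 : Real.sqrt 5 ^ 2 = 5 := Real.sq_sqrt (by norm_num)
  have h5pos : (0:ℝ) < Real.sqrt 5 := Real.sqrt_pos.mpr (by norm_num)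
  have h5lt : Real.sqrt 5 < 3 := by nlinarith
  have h5gt : 2 < Real.sqrt 5 := by nlinarith
  set g : ℝ := (Real.sqrt 5 - 1) / 2 with hg
  have hden : (0:ℝ) < 4 * g ^ 2 - 4 * g + 2 := by nlinarith [sq_nonneg (2*g - 1)]
  have hval : (1 + g ^ 2) / (4 * g ^ 2 - 4 * g + 2) = (3 + Real.sqrt 5) / 4 := by
    rw [div_eq_div_iff hden.ne' (by norm_num)]
    field_simp [hg]
    nlinarith
  constructor
  · intro h hh
    obtain ⟨h0, h1⟩ := hh
    have hdh : (0:ℝ) < 4 * h ^ 2 - 4 * h + 2 := by nlinarith [sq_nonneg (2*h - 1)]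
    rw [div_le_div_iff₀ hdh hden]
    have hg2 : g ^ 2 = 1 - g := by rw [hg]; nlinarith
    nlinarith [mul_nonneg (by nlinarith : (0:ℝ) ≤ 2 + 4 * g) (sq_nonneg (h - g)), hg2]
  · rw [hval]
    have h10 : Real.sqrt 10 ^ 2 = 10 := Real.sq_sqrt (by norm_num)
    have h2 : Real.sqrt 2 ^ 2 = 2 := Real.sq_sqrt (by norm_num)
    have hmul : Real.sqrt 10 * Real.sqrt 2 = 2 * Real.sqrt 5 := by
      rw [← Real.sqrt_mul (by norm_num)]
      rw [show (10:ℝ) * 2 = 2^2 * 5 by norm_num, Real.sqrt_mul (by positivity),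
        Real.sqrt_sq (by norm_num)]
    have key : (3 + Real.sqrt 5) / 4 = ((Real.sqrt 10 + Real.sqrt 2) / 4) ^ 2 := by
      field_simp
      nlinarith
    rw [key, Real.sqrt_sq (by positivity)]
end

section
/- For all x, y in the punctured unit disk B² \ {0} of ℂ, the triangular ratio metric satisfies s_{B²}(x,y) ≥ low(x,y) = |x−y| / min{|x − y*|, |x* − y|}, where x* = x/|x|². -/
/-- The low-function on the punctured unit disk. -/
noncomputable def low (x y : ℂ) : ℝ :=
  ‖x - y‖ /
    min (‖x - y / (‖y‖ : ℂ) ^ 2‖)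
        (‖x / (‖x‖ : ℂ) ^ 2 - y‖)

/-!
The segment from `x` to the inverse point `y* = y / ‖y‖²` leaves the closed unit disk, so it
crosses the unit circle at some `z`. On the circle, `‖z - y‖ = ‖y‖ ‖z - y*‖ ≤ ‖z - y*‖`, hence
`‖x - z‖ + ‖z - y‖ ≤ ‖x - z‖ + ‖z - y*‖ = ‖x - y*‖`. Thus the infimum in `sB` is at most
`‖x - y*‖` and, symmetrically, at most `‖x* - y‖`; it is positive since it is at least `1 - ‖x‖`.
-/

lemma exists_norm_eq_mem_segment {E : Type*} [NormedAddCommGroup E] [NormedSpace ℝ E]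
    {x w : E} {r : ℝ} (hx : ‖x‖ ≤ r) (hw : r ≤ ‖w‖) : ∃ z ∈ segment ℝ x w, ‖z‖ = r :=
  (convex_segment x w).isPreconnected.intermediate_value (left_mem_segment ℝ x w)
    (right_mem_segment ℝ x w) continuous_norm.continuousOn ⟨hx, hw⟩

lemma norm_div_norm_sq (y : ℂ) : ‖y / (‖y‖ : ℂ) ^ 2‖ = ‖y‖⁻¹ := by
  rcases eq_or_ne y 0 with rfl | hy
  · simp
  · rw [norm_div, norm_pow, Complex.norm_real, norm_norm]
    field_simp [norm_ne_zero_iff.2 hy]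

lemma div_norm_sq_eq_inv_conj (y : ℂ) : y / (‖y‖ : ℂ) ^ 2 = (starRingEnd ℂ y)⁻¹ := by
  rcases eq_or_ne y 0 with rfl | hy
  · simp
  · rw [← Complex.ofReal_pow, ← Complex.normSq_eq_norm_sq, ← Complex.mul_conj]
    field_simp [(map_ne_zero _).2 hy]

lemma norm_mul_norm_sub_div_norm_sq {y z : ℂ} (hy : y ≠ 0) (hz : ‖z‖ = 1) :
    ‖y‖ * ‖z - y / (‖y‖ : ℂ) ^ 2‖ = ‖z - y‖ := by
  have hy' : starRingEnd ℂ y ≠ 0 := (map_ne_zero _).2 hy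
  have hzz : z * starRingEnd ℂ z = 1 := by
    rw [Complex.mul_conj, Complex.normSq_eq_norm_sq, hz]; norm_num
  -- `1 = z z̄` turns `ȳ z - 1` into `z (ȳ - z̄)`
  have h : starRingEnd ℂ y * (z - (starRingEnd ℂ y)⁻¹) = z * starRingEnd ℂ (y - z) := by
    rw [map_sub]; field_simp; linear_combination hzz
  rw [div_norm_sq_eq_inv_conj, ← Complex.norm_conj y, ← norm_mul, h, norm_mul, hz,
    Complex.norm_conj, one_mul, norm_sub_rev]

lemma norm_sub_le_norm_sub_div_norm_sq {y z : ℂ} (hy : ‖y‖ ≤ 1) (hy0 : y ≠ 0) (hz : ‖z‖ = 1) :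
    ‖z - y‖ ≤ ‖z - y / (‖y‖ : ℂ) ^ 2‖ := by
  rw [← norm_mul_norm_sub_div_norm_sq hy0 hz]
  exact mul_le_of_le_one_left (norm_nonneg _) hy

lemma exists_norm_eq_one_add_le_norm_sub_div_norm_sq {x y : ℂ} (hx : ‖x‖ ≤ 1) (hy : ‖y‖ ≤ 1)
    (hy0 : y ≠ 0) : ∃ z : ℂ, ‖z‖ = 1 ∧ ‖x - z‖ + ‖z - y‖ ≤ ‖x - y / (‖y‖ : ℂ) ^ 2‖ := by
  have hw : 1 ≤ ‖y / (‖y‖ : ℂ) ^ 2‖ := by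
    rw [norm_div_norm_sq]; exact one_le_inv₀ (norm_pos_iff.2 hy0) |>.2 hy
  obtain ⟨z, hseg, hz⟩ := exists_norm_eq_mem_segment hx hw
  refine ⟨z, hz, ?_⟩
  have hsplit := dist_add_dist_of_mem_segment hseg
  simp only [dist_eq_norm] at hsplit
  linarith [norm_sub_le_norm_sub_div_norm_sq hy hy0 hz]

section CircleInf

variable (x y : ℂ)

noncomputable abbrev circleInf : ℝ :=
  sInf ((fun z => ‖x - z‖ + ‖z - y‖) '' {z : ℂ | ‖z‖ = 1})

variable {x y}

lemma circleInf_le {c : ℝ} (h : ∃ z : ℂ, ‖z‖ = 1 ∧ ‖x - z‖ + ‖z - y‖ ≤ c) :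
    circleInf x y ≤ c := by
  obtain ⟨z, hz, hle⟩ := h
  have hbdd : BddBelow ((fun z => ‖x - z‖ + ‖z - y‖) '' {z : ℂ | ‖z‖ = 1}) := by
    refine ⟨0, ?_⟩
    rintro _ ⟨w, -, rfl⟩
    positivity
  exact (csInf_le hbdd ⟨z, hz, rfl⟩).trans hle

lemma one_sub_norm_le_circleInf : 1 - ‖x‖ ≤ circleInf x y := by
  refine le_csInf ⟨_, 1, by simp, rfl⟩ ?_
  rintro _ ⟨z, hz, rfl⟩
  have := norm_sub_norm_le z x
  rw [norm_sub_rev z x, show ‖z‖ = 1 from hz] at this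
  show 1 - ‖x‖ ≤ ‖x - z‖ + ‖z - y‖
  linarith [norm_nonneg (z - y)]

end CircleInf

theorem stmt_8 (x y : ℂ) (hx : ‖x‖ < 1) (hy : ‖y‖ < 1)
    (hx0 : x ≠ 0) (hy0 : y ≠ 0) :
    low x y ≤ sB x y := by
  have hpos : 0 < circleInf x y := by linarith [one_sub_norm_le_circleInf (x := x) (y := y)]
  have hxy : circleInf x y ≤ ‖x - y / (‖y‖ : ℂ) ^ 2‖ :=
    circleInf_le (exists_norm_eq_one_add_le_norm_sub_div_norm_sq hx.le hy.le hy0)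
  have hyx : circleInf x y ≤ ‖x / (‖x‖ : ℂ) ^ 2 - y‖ := by
    obtain ⟨z, hz, hle⟩ := exists_norm_eq_one_add_le_norm_sub_div_norm_sq hy.le hx.le hx0
    refine circleInf_le ⟨z, hz, ?_⟩
    rw [norm_sub_rev x z, norm_sub_rev z y, norm_sub_rev _ y]
    linarith
  exact div_le_div_of_nonneg_left (norm_nonneg _) hpos (le_min hxy hyx)
end

section
/- Let G ⊊ ℝⁿ be a domain, x, y ∈ G, and t a point on the segment [x,y] with t ∈ G. Then s_G(x,t) ≤ s_G(x,y). In other words, for fixed x and fixed direction of the ray from x through y, s_G(x,y) is increasing in |x−y|. -/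
theorem stmt_10 {n : ℕ} (G : Set (EuclideanSpace ℝ (Fin n)))
    (hG_open : IsOpen G) (hG_ne : G.Nonempty) (hG_proper : G ≠ Set.univ)
    (hG_conn : IsConnected G)
    (x y t : EuclideanSpace ℝ (Fin n)) (hx : x ∈ G) (hy : y ∈ G)
    (ht : t ∈ segment ℝ x y) (htG : t ∈ G) :
    sG G x t ≤ sG G x y := by
  obtain ⟨a, b, ha, hb, hab, hT⟩ := ht
  have ha' : a = 1 - b := by linarith
  have hFne : (frontier G).Nonempty := by
    by_contra h
    rw [Set.not_nonempty_iff_eq_empty] at h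
    have hclopen : IsClopen G := isClopen_iff_frontier_eq_empty.mpr h
    rcases isClopen_iff.mp hclopen with h1 | h1
    · exact hG_ne.ne_empty h1
    · exact hG_proper h1
  have hFclosed : IsClosed (frontier G) := isClosed_frontier
  have hxF : x ∉ frontier G := by
    intro hxf
    rw [hG_open.frontier_eq] at hxf
    exact hxf.2 hx
  have hdx : 0 < Metric.infDist x (frontier G) :=
    (hFclosed.notMem_iff_infDist_pos hFne).mp hxF
  have hbdd : ∀ u : EuclideanSpace ℝ (Fin n),
      BddBelow ((fun z => dist x z + dist z u) '' frontier G) := by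
    intro u
    refine ⟨0, ?_⟩
    rintro v ⟨w, hw, rfl⟩
    positivity
  set Dy := sInf ((fun z => dist x z + dist z y) '' frontier G) with hDydef
  set Dt := sInf ((fun z => dist x z + dist z t) '' frontier G) with hDtdef
  have hDy : 0 < Dy := by
    refine lt_of_lt_of_le hdx (le_csInf (hFne.image _) ?_)
    rintro v ⟨w, hw, rfl⟩
    have h1 : Metric.infDist x (frontier G) ≤ dist x w := Metric.infDist_le_dist_of_mem hw
    have h2 : (0:ℝ) ≤ dist w y := dist_nonneg
    dsimp only
    linarith
  have key : ∀ w ∈ frontier G, b * (dist x w + dist w y) ≤ dist x w + dist w t := by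
    intro w hw
    have h1 : b • (w - y) = (w - t) + a • (x - w) := by
      rw [← hT, ha']; module
    have h2 : b * dist w y ≤ dist w t + a * dist x w := by
      have h3 := norm_add_le (w - t) (a • (x - w))
      rw [← h1] at h3
      rw [norm_smul, norm_smul, Real.norm_eq_abs, Real.norm_eq_abs,
        abs_of_nonneg ha, abs_of_nonneg hb] at h3
      simpa [dist_eq_norm] using h3
    have h4 : a * dist x w + b * dist x w = dist x w := by
      rw [← add_mul, hab, one_mul]
    linarith
  have hxt : dist x t = b * dist x y := by
    have h1 : x - t = b • (x - y) := by rw [← hT, ha']; module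
    rw [dist_eq_norm, dist_eq_norm, h1, norm_smul, Real.norm_eq_abs, abs_of_nonneg hb]
  have hDt : b * Dy ≤ Dt := by
    refine le_csInf (hFne.image _) ?_
    rintro v ⟨w, hw, rfl⟩
    have h1 : Dy ≤ dist x w + dist w y := csInf_le (hbdd y) ⟨w, hw, rfl⟩
    have h2 := key w hw
    dsimp only
    nlinarith
  rcases eq_or_lt_of_le hb with hb0 | hb0
  · have : sG G x t = 0 := by
      simp [sG, hxt, ← hb0]
    rw [this]
    exact div_nonneg dist_nonneg (le_of_lt hDy)
  · have hbDy : 0 < b * Dy := mul_pos hb0 hDy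
    have hstep : sG G x t ≤ (b * dist x y) / (b * Dy) := by
      rw [sG, hxt, ← hDtdef]
      exact div_le_div_of_nonneg_left (mul_nonneg hb0.le dist_nonneg) hbDy hDt
    calc sG G x t ≤ (b * dist x y) / (b * Dy) := hstep
      _ = dist x y / Dy := mul_div_mul_left _ _ (ne_of_gt hb0)
      _ = sG G x y := rfl
end

section
/- Fix a sphere S^{n−1}(j,r) ⊂ ℝⁿ and a point z ∈ ℝⁿ with d = |z−j| − r > 0. Then sup over x, y ∈ S^{n−1}(j,r) of |x−y|/(|x−z|+|z−y|) equals r/(r+d). -/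
/-! Write `R = |z - j| = r + d`. Ptolemy's inequality for the quadrangle `x z y j` gives
`|x - y| R ≤ r (|x - z| + |z - y|)` for all `x, y` on the sphere, so every ratio is at most `r / R`.
The bound is attained by the two ends of the diameter through `z`: for them
`|x - y| = 2r` and `|x - z| + |z - y| = (R + r) + (R - r) = 2R`. -/

open Metric

section Ptolemy

variable {E : Type*} [NormedAddCommGroup E] [InnerProductSpace ℝ E]

theorem dist_mul_dist_le_of_mem_sphere {j x y : E} {r : ℝ} (hx : x ∈ sphere j r)
    (hy : y ∈ sphere j r) (z : E) :
    dist x y * dist z j ≤ r * (dist x z + dist z y) := by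
  have hptolemy := EuclideanGeometry.mul_dist_le_mul_dist_add_mul_dist x z y j
  rw [mem_sphere.1 hx, mem_sphere.1 hy] at hptolemy
  linarith

theorem dist_div_dist_add_dist_le_of_mem_sphere {j x y z : E} {r : ℝ} (hx : x ∈ sphere j r)
    (hy : y ∈ sphere j r) (hz : r < dist z j) :
    dist x y / (dist x z + dist z y) ≤ r / dist z j := by
  have hxz : dist z j - r ≤ dist x z := by
    linarith [dist_triangle z x j, mem_sphere.1 hx, dist_comm x z]
  have hzy : dist z j - r ≤ dist z y := by
    linarith [dist_triangle z y j, mem_sphere.1 hy]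
  have hr : 0 ≤ r := mem_sphere.1 hx ▸ dist_nonneg
  rw [div_le_div_iff₀ (by linarith) (by linarith)]
  exact dist_mul_dist_le_of_mem_sphere hx hy z

end Ptolemy

section Diameter

variable {E : Type*} [NormedAddCommGroup E] [NormedSpace ℝ E]

theorem exists_mem_sphere_dist_div_dist_add_dist_eq {j z : E} {r : ℝ} (hr : 0 ≤ r)
    (hz : r < dist z j) :
    ∃ x ∈ sphere j r, ∃ y ∈ sphere j r, dist x y / (dist x z + dist z y) = r / dist z j := by
  set R := dist z j
  have hR : 0 < R := hr.trans_lt hz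
  set c := r / R
  have hc : 0 ≤ c := div_nonneg hr hR.le
  have hc1 : c ≤ 1 := (div_le_one hR).2 hz.le
  have hcR : c * R = r := div_mul_cancel₀ r hR.ne'
  have hjz : dist j z = R := dist_comm j z
  refine ⟨AffineMap.lineMap j z (-c), ?_, AffineMap.lineMap j z c, ?_, ?_⟩
  · rw [mem_sphere, dist_lineMap_left, norm_neg, Real.norm_of_nonneg hc, hjz, hcR]
  · rw [mem_sphere, dist_lineMap_left, Real.norm_of_nonneg hc, hjz, hcR]
  · rw [dist_lineMap_lineMap, dist_lineMap_right, dist_comm z, dist_lineMap_right, hjz,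
      Real.dist_eq, Real.norm_of_nonneg (by linarith), Real.norm_of_nonneg (by linarith),
      abs_of_nonpos (by linarith)]
    field_simp
    ring

end Diameter

theorem stmt_12_general {n : ℕ} (j z : EuclideanSpace ℝ (Fin n)) (r d : ℝ)
    (hr : 0 < r) (hd : d = dist z j - r) (hd0 : 0 < d) :
    sSup {q : ℝ | ∃ x ∈ Metric.sphere j r, ∃ y ∈ Metric.sphere j r,
        q = dist x y / (dist x z + dist z y)} = r / (r + d) := by
  have hz : r < dist z j := by linarith
  rw [show r + d = dist z j by linarith]
  refine IsGreatest.csSup_eq ⟨?_, ?_⟩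
  · obtain ⟨x, hx, y, hy, hxy⟩ := exists_mem_sphere_dist_div_dist_add_dist_eq hr.le hz
    exact ⟨x, hx, y, hy, hxy.symm⟩
  · rintro q ⟨x, hx, y, hy, rfl⟩
    exact dist_div_dist_add_dist_le_of_mem_sphere hx hy hz

theorem stmt_12 {n : ℕ} (hn : 2 ≤ n) (j z : EuclideanSpace ℝ (Fin n)) (r d : ℝ)
    (hr : 0 < r) (hd : d = dist z j - r) (hd0 : 0 < d) :
    sSup {q : ℝ | ∃ x ∈ Metric.sphere j r, ∃ y ∈ Metric.sphere j r,
        q = dist x y / (dist x z + dist z y)} = r / (r + d) :=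
  stmt_12_general j z r d hr hd hd0
end

section
/- Let G ⊊ ℝⁿ be a domain and J = closure of B^n(k,r) a closed ball contained in G, with d = dist(J, ∂G) > 0. Then the s_G-diameter of J, i.e., sup_{x,y ∈ J} s_G(x,y), equals r/(r+d). -/
/-!
Every boundary point `z` satisfies `|z - k| ≥ r + d`. Inverting `z` in the sphere `|w - k| = r`
gives a point `w` with `|z - k| |w - x| ≤ r |z - x|` for all `x` in the ball, so the triangle
inequality through `w` yields `(r + d) |x - y| ≤ r (|x - z| + |z - y|)`, i.e.
`s_G(x, y) ≤ r / (r + d)`. Equality holds for the diameter of the ball through a nearest boundary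
point `z₀`, where `|z₀ - k| = r + d`.
-/

open Metric Set AffineMap EuclideanGeometry

section Inversion

variable {E : Type*} [NormedAddCommGroup E] [InnerProductSpace ℝ E]

/-- The squares of the two sides differ by `(‖v‖² - r²) (r² - ‖u‖²) ≥ 0`. -/
theorem norm_mul_norm_smul_sub_le {u v : E} {r : ℝ} (hr : 0 < r) (hu : ‖u‖ ≤ r) (hv : r ≤ ‖v‖) :
    ‖v‖ * ‖(r / ‖v‖) ^ 2 • v - u‖ ≤ r * ‖v - u‖ := by
  have hv0 : 0 < ‖v‖ := hr.trans_le hv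
  refine le_of_pow_le_pow_left₀ two_ne_zero (by positivity) ?_
  have hsq : (‖v‖ * ‖(r / ‖v‖) ^ 2 • v - u‖) ^ 2
      = r ^ 4 - 2 * r ^ 2 * inner ℝ v u + ‖v‖ ^ 2 * ‖u‖ ^ 2 := by
    rw [mul_pow, norm_sub_sq_real, real_inner_smul_left, norm_smul, Real.norm_eq_abs,
      abs_of_nonneg (by positivity)]
    field_simp
  rw [hsq, mul_pow, norm_sub_sq_real]
  nlinarith [mul_nonneg (sub_nonneg.2 (pow_le_pow_left₀ hr.le hv 2))
    (sub_nonneg.2 (pow_le_pow_left₀ (norm_nonneg u) hu 2))]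

theorem dist_mul_dist_inversion_le {c x z : E} {r : ℝ} (hr : 0 < r) (hx : dist x c ≤ r)
    (hz : r ≤ dist z c) : dist z c * dist (inversion c r z) x ≤ r * dist z x := by
  have hw : inversion c r z - x = (r / ‖z - c‖) ^ 2 • (z - c) - (x - c) := by
    rw [inversion, vsub_eq_sub, vadd_eq_add, dist_eq_norm]
    abel
  rw [dist_eq_norm] at hx hz ⊢
  rw [dist_eq_norm, hw, dist_eq_norm z x, ← sub_sub_sub_cancel_right z x c]
  exact norm_mul_norm_smul_sub_le hr hx hz

theorem mul_dist_le_mul_dist_add_dist {k x y z : E} {r R : ℝ} (hr : 0 < r) (hrR : r ≤ R)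
    (hx : x ∈ closedBall k r) (hy : y ∈ closedBall k r) (hz : R ≤ dist z k) :
    R * dist x y ≤ r * (dist x z + dist z y) := by
  set w := inversion k r z
  have hxw := dist_mul_dist_inversion_le hr (mem_closedBall.1 hx) (hrR.trans hz)
  have hyw := dist_mul_dist_inversion_le hr (mem_closedBall.1 hy) (hrR.trans hz)
  calc R * dist x y ≤ dist z k * (dist w x + dist w y) := by
        gcongr
        exact dist_triangle_left x y w
    _ ≤ r * dist z x + r * dist z y := by rw [mul_add]; gcongr
    _ = r * (dist x z + dist z y) := by rw [dist_comm z x, mul_add]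

end Inversion

section Segment

variable {E : Type*} [NormedAddCommGroup E] [NormedSpace ℝ E]

theorem exists_mem_closedBall_dist_eq_two_mul {k z : E} {r : ℝ} (hr : 0 < r)
    (hrz : r ≤ dist z k) :
    ∃ x ∈ closedBall k r, ∃ y ∈ closedBall k r,
      dist x y = 2 * r ∧ dist x z + dist z y = 2 * dist z k := by
  have hρ : 0 < dist k z := dist_comm z k ▸ hr.trans_le hrz
  have hc : r / dist k z ≤ 1 := (div_le_one hρ).2 (dist_comm z k ▸ hrz)
  refine ⟨lineMap k z (r / dist k z), ?_, lineMap k z (-(r / dist k z)), ?_, ?_, ?_⟩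
  · rw [mem_closedBall, dist_lineMap_left, Real.norm_eq_abs, abs_of_pos (by positivity),
      div_mul_cancel₀ _ hρ.ne']
  · rw [mem_closedBall, dist_lineMap_left, norm_neg, Real.norm_eq_abs, abs_of_pos (by positivity),
      div_mul_cancel₀ _ hρ.ne']
  · rw [dist_lineMap_lineMap, dist_eq_norm, sub_neg_eq_add, Real.norm_eq_abs,
      abs_of_pos (by positivity)]
    field_simp
    ring
  · rw [dist_lineMap_right, dist_comm z, dist_lineMap_right, sub_neg_eq_add, Real.norm_eq_abs,
      Real.norm_eq_abs, abs_of_nonneg (sub_nonneg.2 hc), abs_of_pos (by positivity), dist_comm z k]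
    ring

theorem sInf_image2_dist_closedBall [ProperSpace E] {F : Set E} (hF : IsClosed F)
    (hne : F.Nonempty) {k : E} {r : ℝ} (hr : 0 ≤ r) (hdisj : Disjoint (closedBall k r) F) :
    sInf (image2 dist (closedBall k r) F) = infDist k F - r := by
  obtain ⟨b, hb, hkb⟩ := hF.exists_infDist_eq_dist hne k
  have hrb : r < dist k b := by
    by_contra! h
    exact disjoint_left.1 hdisj (mem_closedBall'.2 h) hb
  refine le_antisymm ?_ ?_
  · have hp : dist (lineMap k b (r / dist k b)) k = r := by
      rw [dist_lineMap_left, Real.norm_eq_abs, abs_of_nonneg (by positivity)]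
      field_simp [(hr.trans_lt hrb).ne']
    refine (csInf_le ⟨0, ?_⟩ (mem_image2_of_mem (mem_closedBall.2 hp.le) hb)).trans_eq ?_
    · rintro _ ⟨_, _, _, _, rfl⟩
      exact dist_nonneg
    · have hc : r / dist k b ≤ 1 := (div_le_one (hr.trans_lt hrb)).2 hrb.le
      rw [dist_lineMap_right, Real.norm_eq_abs, abs_of_nonneg (by linarith), hkb]
      field_simp [(hr.trans_lt hrb).ne']
  · refine le_csInf (Nonempty.image2 ⟨k, mem_closedBall_self hr⟩ hne) ?_
    rintro _ ⟨a, ha, z, hz, rfl⟩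
    linarith [infDist_le_dist_of_mem (x := k) hz, dist_triangle k a z,
      mem_closedBall'.1 ha]

end Segment

theorem disjoint_of_sInf_image2_dist_pos {X : Type*} [PseudoMetricSpace X] {s t : Set X}
    (h : 0 < sInf (image2 dist s t)) : Disjoint s t := by
  refine disjoint_left.2 fun a has hat => h.not_ge ?_
  refine (csInf_le ⟨0, ?_⟩ (mem_image2_of_mem has hat)).trans_eq (dist_self a)
  rintro _ ⟨_, _, _, _, rfl⟩
  exact dist_nonneg

section TriangularRatio

variable {n : ℕ} {G : Set (EuclideanSpace ℝ (Fin n))} {x y : EuclideanSpace ℝ (Fin n)} {r R : ℝ}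

theorem sG_le_div (hr : 0 < r) (hR : 0 < R) (hG : (frontier G).Nonempty)
    (h : ∀ z ∈ frontier G, R * dist x y ≤ r * (dist x z + dist z y)) : sG G x y ≤ r / R := by
  rcases eq_or_ne x y with rfl | hxy
  · rw [sG, dist_self, zero_div]
    positivity
  have hI : R * dist x y / r ≤ sInf ((fun z => dist x z + dist z y) '' frontier G) := by
    refine le_csInf (hG.image _) ?_
    rintro _ ⟨z, hz, rfl⟩
    rw [div_le_iff₀' hr]
    exact h z hz
  have hI0 : 0 < R * dist x y / r := by have := dist_pos.2 hxy; positivity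
  rw [sG, div_le_div_iff₀ (hI0.trans_le hI) hR]
  rw [div_le_iff₀' hr] at hI
  linarith

theorem sG_eq_div {z₀ : EuclideanSpace ℝ (Fin n)} (hr : 0 < r) (hR : 0 < R) (hxy : x ≠ y)
    (h : ∀ z ∈ frontier G, R * dist x y ≤ r * (dist x z + dist z y)) (hz₀ : z₀ ∈ frontier G)
    (heq : R * dist x y = r * (dist x z₀ + dist z₀ y)) : sG G x y = r / R := by
  have hmin : IsLeast ((fun z => dist x z + dist z y) '' frontier G) (dist x z₀ + dist z₀ y) := by
    refine ⟨⟨z₀, hz₀, rfl⟩, ?_⟩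
    rintro _ ⟨z, hz, rfl⟩
    exact le_of_mul_le_mul_left (heq ▸ h z hz) hr
  have hsum : 0 < dist x z₀ + dist z₀ y := by
    have := dist_pos.2 hxy
    nlinarith
  rw [sG, hmin.csInf_eq, div_eq_div_iff hsum.ne' hR.ne']
  linarith

end TriangularRatio

theorem stmt_13_general {n : ℕ} (G : Set (EuclideanSpace ℝ (Fin n)))
    (hG_ne : G.Nonempty) (hG_proper : G ≠ Set.univ)
    (k : EuclideanSpace ℝ (Fin n)) (r d : ℝ) (hr : 0 < r)
    (hd : d = sInf (Set.image2 dist (Metric.closedBall k r) (frontier G)))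
    (hd0 : 0 < d) :
    sSup {q : ℝ | ∃ x ∈ Metric.closedBall k r, ∃ y ∈ Metric.closedBall k r, q = sG G x y} =
      r / (r + d) := by
  have hF : (frontier G).Nonempty := nonempty_frontier_iff.2 ⟨hG_ne, hG_proper⟩
  have hinf : infDist k (frontier G) = r + d := by
    rw [hd, sInf_image2_dist_closedBall isClosed_frontier hF hr.le
      (disjoint_of_sInf_image2_dist_pos (hd ▸ hd0))]
    ring
  have hfar : ∀ z ∈ frontier G, r + d ≤ dist z k := fun z hz =>
    hinf ▸ dist_comm k z ▸ infDist_le_dist_of_mem hz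
  have hbound : ∀ x ∈ closedBall k r, ∀ y ∈ closedBall k r, ∀ z ∈ frontier G,
      (r + d) * dist x y ≤ r * (dist x z + dist z y) := fun x hx y hy z hz =>
    mul_dist_le_mul_dist_add_dist hr (by linarith) hx hy (hfar z hz)
  obtain ⟨z₀, hz₀, hz₀k⟩ := isClosed_frontier.exists_infDist_eq_dist hF k
  rw [hinf, dist_comm] at hz₀k
  obtain ⟨x₀, hx₀, y₀, hy₀, hxy₀, hsum₀⟩ :=
    exists_mem_closedBall_dist_eq_two_mul hr (by linarith : r ≤ dist z₀ k)
  refine IsGreatest.csSup_eq ⟨⟨x₀, hx₀, y₀, hy₀, (sG_eq_div hr (by positivity) ?_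
    (hbound x₀ hx₀ y₀ hy₀) hz₀ ?_).symm⟩, ?_⟩
  · exact dist_ne_zero.1 (by rw [hxy₀]; positivity)
  · rw [hxy₀, hsum₀, ← hz₀k]
    ring
  · rintro _ ⟨x, hx, y, hy, rfl⟩
    exact sG_le_div hr (by positivity) hF (hbound x hx y hy)

theorem stmt_13 {n : ℕ} (G : Set (EuclideanSpace ℝ (Fin n)))
    (hG_open : IsOpen G) (hG_ne : G.Nonempty) (hG_proper : G ≠ Set.univ)
    (hG_conn : IsConnected G)
    (k : EuclideanSpace ℝ (Fin n)) (r d : ℝ) (hr : 0 < r)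
    (hJG : Metric.closedBall k r ⊆ G)
    (hd : d = sInf (Set.image2 dist (Metric.closedBall k r) (frontier G)))
    (hd0 : 0 < d) :
    sSup {q : ℝ | ∃ x ∈ Metric.closedBall k r, ∃ y ∈ Metric.closedBall k r, q = sG G x y} =
      r / (r + d) :=
  stmt_13_general G hG_ne hG_proper k r d hr hd hd0
end

section
/- For all x, y in the unit disk B² ⊂ ℂ, s_{B²}(x,y) ≥ |x−y| / sqrt(|x−y|² + (2 − |x+y|)²). -/
theorem sq_norm_sub_add_norm_sub_le {E : Type*} [NormedAddCommGroup E] [InnerProductSpace ℝ E]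
    (x y z : E) : (‖x - z‖ + ‖z - y‖) ^ 2 ≤ ‖x - y‖ ^ 2 + ‖x + y - (2 : ℝ) • z‖ ^ 2 := by
  have parallelogram := parallelogram_law_with_norm ℝ (x - z) (z - y)
  rw [show x - z + (z - y) = x - y by abel,
    show x - z - (z - y) = x + y - (2 : ℝ) • z by rw [two_smul]; abel] at parallelogram
  nlinarith [sq_nonneg (‖x - z‖ - ‖z - y‖)]

theorem exists_norm_eq_one_norm_sub_smul_eq {E : Type*} [NormedAddCommGroup E]
    [NormedSpace ℝ E] [Nontrivial E] (w : E) (r : ℝ) :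
    ∃ u : E, ‖u‖ = 1 ∧ ‖w - r • u‖ = |‖w‖ - r| := by
  rcases eq_or_ne w 0 with rfl | hw
  · obtain ⟨u, hu⟩ := exists_norm_eq E zero_le_one
    exact ⟨u, hu, by simp [norm_smul, hu]⟩
  · have hw' : 0 < ‖w‖ := norm_pos_iff.mpr hw
    refine ⟨‖w‖⁻¹ • w, norm_smul_inv_norm hw, ?_⟩
    have hsmul : w - r • (‖w‖⁻¹ • w) = (1 - r * ‖w‖⁻¹) • w := by
      rw [sub_smul, one_smul, smul_smul]
    rw [hsmul, norm_smul, Real.norm_eq_abs, ← abs_norm w, ← abs_mul, abs_norm]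
    congr 1
    field_simp

theorem div_le_sB_of_norm_eq_one {x y z : ℂ} {b : ℝ} (hz : ‖z‖ = 1)
    (hb : ‖x - z‖ + ‖z - y‖ ≤ b) : ‖x - y‖ / b ≤ sB x y := by
  set S := (fun z => ‖x - z‖ + ‖z - y‖) '' {z : ℂ | ‖z‖ = 1}
  have hzS : ‖x - z‖ + ‖z - y‖ ∈ S := ⟨z, hz, rfl⟩
  have triangle : ∀ s ∈ S, ‖x - y‖ ≤ s := by
    rintro _ ⟨w, -, rfl⟩
    exact norm_sub_le_norm_sub_add_norm_sub x w y
  have hS_le : sInf S ≤ b :=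
    (csInf_le ⟨‖x - y‖, triangle⟩ hzS).trans hb
  have hS_ge : ‖x - y‖ ≤ sInf S := le_csInf ⟨_, hzS⟩ triangle
  rcases eq_or_ne x y with rfl | hxy
  · simp [sB]
  · exact div_le_div_of_nonneg_left (norm_nonneg _)
      ((norm_pos_iff.mpr (sub_ne_zero.mpr hxy)).trans_le hS_ge) hS_le

theorem stmt_16_general (x y : ℂ) :
    ‖x - y‖ /
        Real.sqrt (‖x - y‖ ^ 2 + (2 - ‖x + y‖) ^ 2) ≤ sB x y := by
  obtain ⟨u, hu, hdist⟩ := exists_norm_eq_one_norm_sub_smul_eq (x + y) 2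
  refine div_le_sB_of_norm_eq_one hu (Real.le_sqrt_of_sq_le ?_)
  calc (‖x - u‖ + ‖u - y‖) ^ 2 ≤ ‖x - y‖ ^ 2 + ‖x + y - (2 : ℝ) • u‖ ^ 2 :=
        sq_norm_sub_add_norm_sub_le x y u
    _ = ‖x - y‖ ^ 2 + (2 - ‖x + y‖) ^ 2 := by rw [hdist, sq_abs]; ring

theorem stmt_16 (x y : ℂ) (hx : ‖x‖ < 1) (hy : ‖y‖ < 1) :
    ‖x - y‖ /
        Real.sqrt (‖x - y‖ ^ 2 + (2 - ‖x + y‖) ^ 2) ≤ sB x y :=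
  stmt_16_general x y
end

section
/- For all x, y in the unit disk B² ⊂ ℂ with hyperbolic midpoint q and t = tanh(ρ_{B²}(x,y)/4), the triangular ratio metric satisfies s_{B²}(x,y) ≤ (1+|q|)t / (1+|q|t²). -/
/-- The hyperbolic metric of the unit disk, characterized by
`sinh²(ρ(x,y)/2) = |x−y|²/((1−|x|²)(1−|y|²))`. -/
noncomputable def rhoB (x y : ℂ) : ℝ :=
  2 * Real.arsinh (‖x - y‖ /
    Real.sqrt ((1 - ‖x‖ ^ 2) * (1 - ‖y‖ ^ 2)))

/-! The disk automorphism `mobius q` moves the midpoint `q` to `0` and preserves the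
pseudo-hyperbolic distance `tanh (ρ / 2)`. It sends `x`, `y` to points `a`, `b` with
`|a| = |b| = t` at pseudo-hyperbolic distance `2t / (1 + t²)`; this is the equality case of the
triangle inequality through `0`, so `b = -a`, i.e. `x = (q + a) / (1 + q̄ a)` and
`y = (q - a) / (1 - q̄ a)`. For `|z| = 1`, a weighted combination of `|x - z| = |1 - x̄ z|` and
`|z - y| = |1 - ȳ z|` equals `2 |(1 - t² |q|²) - (1 - t²) q̄ z| ≥ 2 (1 - |q|) (1 + |q| t²)`,
which bounds `|x - y| / (|x - z| + |z - y|)` uniformly in `z`. -/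

open Complex ComplexConjugate

theorem Real.tanh_two_mul (u : ℝ) : tanh (2 * u) = 2 * tanh u / (1 + tanh u ^ 2) := by
  have := cosh_pos u
  rw [tanh_eq_sinh_div_cosh, tanh_eq_sinh_div_cosh, sinh_two_mul, cosh_two_mul]
  field_simp

namespace HyperbolicDisk

noncomputable def pseudoHyperbolicDist (x y : ℂ) : ℝ := ‖x - y‖ / ‖1 - conj x * y‖

noncomputable def mobius (q z : ℂ) : ℂ := (z - q) / (1 - conj q * z)

theorem norm_one_sub_conj_mul_sq (x y : ℂ) :
    ‖1 - conj x * y‖ ^ 2 = (1 - ‖x‖ ^ 2) * (1 - ‖y‖ ^ 2) + ‖x - y‖ ^ 2 := by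
  simp only [Complex.sq_norm, normSq_apply, sub_re, sub_im, mul_re, mul_im, one_re, one_im,
    conj_re, conj_im]
  ring

theorem one_sub_conj_mul_ne_zero {x y : ℂ} (hx : ‖x‖ < 1) (hy : ‖y‖ ≤ 1) :
    1 - conj x * y ≠ 0 := by
  intro h
  have : ‖conj x * y‖ = 1 := by rw [← sub_eq_zero.mp h, norm_one]
  rw [norm_mul, norm_conj] at this
  nlinarith [norm_nonneg x, norm_nonneg y]

theorem norm_sub_eq_norm_one_sub_conj_mul (x : ℂ) {z : ℂ} (hz : ‖z‖ = 1) :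
    ‖x - z‖ = ‖1 - conj x * z‖ := by
  have hzz : conj z * z = 1 := by rw [conj_mul', hz]; norm_num
  calc ‖x - z‖ = ‖conj z * (z - x)‖ := by rw [norm_mul, norm_conj, hz, one_mul, norm_sub_rev]
    _ = ‖conj (1 - conj x * z)‖ := by
      congr 1
      simp only [map_sub, map_one, map_mul, conj_conj]
      linear_combination hzz
    _ = ‖1 - conj x * z‖ := norm_conj _

theorem tanh_half_rhoB {x y : ℂ} (hx : ‖x‖ < 1) (hy : ‖y‖ < 1) :
    Real.tanh (rhoB x y / 2) = pseudoHyperbolicDist x y := by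
  have hP : 0 < (1 - ‖x‖ ^ 2) * (1 - ‖y‖ ^ 2) := by
    apply mul_pos <;> nlinarith [norm_nonneg x, norm_nonneg y]
  have hden : √(1 + (‖x - y‖ / √((1 - ‖x‖ ^ 2) * (1 - ‖y‖ ^ 2))) ^ 2) =
      ‖1 - conj x * y‖ / √((1 - ‖x‖ ^ 2) * (1 - ‖y‖ ^ 2)) := by
    rw [div_pow, Real.sq_sqrt hP.le, ← Real.sqrt_sq (norm_nonneg (1 - conj x * y)),
      norm_one_sub_conj_mul_sq, ← Real.sqrt_div (by positivity), add_div, div_self hP.ne']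
  rw [rhoB, mul_div_cancel_left₀ _ two_ne_zero, Real.tanh_arsinh, hden,
    div_div_div_cancel_right₀ (Real.sqrt_pos.mpr hP).ne', pseudoHyperbolicDist]

theorem pseudoHyperbolicDist_comm (x y : ℂ) :
    pseudoHyperbolicDist x y = pseudoHyperbolicDist y x := by
  rw [pseudoHyperbolicDist, pseudoHyperbolicDist, norm_sub_rev, ← norm_conj (1 - conj y * x)]
  simp only [map_sub, map_one, map_mul, conj_conj, mul_comm]

theorem mobius_mul_one_sub_conj_mul {q z : ℂ} (h : 1 - conj q * z ≠ 0) :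
    mobius q z * (1 - conj q * z) = z - q :=
  div_mul_cancel₀ _ h

theorem norm_mobius (q z : ℂ) : ‖mobius q z‖ = pseudoHyperbolicDist q z := by
  rw [mobius, pseudoHyperbolicDist, norm_div, norm_sub_rev]

theorem pseudoHyperbolicDist_mobius {q x y : ℂ} (hq : ‖q‖ < 1) (hx : ‖x‖ ≤ 1) (hy : ‖y‖ ≤ 1) :
    pseudoHyperbolicDist (mobius q x) (mobius q y) = pseudoHyperbolicDist x y := by
  have hdx := one_sub_conj_mul_ne_zero hq hx
  have hdy := one_sub_conj_mul_ne_zero hq hy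
  have hdq := one_sub_conj_mul_ne_zero hq hq.le
  have hsub : mobius q x - mobius q y =
      (x - y) * (1 - conj q * q) / ((1 - conj q * x) * (1 - conj q * y)) := by
    rw [eq_div_iff (mul_ne_zero hdx hdy)]
    linear_combination (1 - conj q * y) * mobius_mul_one_sub_conj_mul hdx -
      (1 - conj q * x) * mobius_mul_one_sub_conj_mul hdy
  have hone : 1 - conj (mobius q x) * mobius q y =
      (1 - conj x * y) * (1 - conj q * q) / (conj (1 - conj q * x) * (1 - conj q * y)) := by
    have hconj := congrArg conj (mobius_mul_one_sub_conj_mul hdx)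
    simp only [map_mul, map_sub, map_one, conj_conj] at hconj
    rw [eq_div_iff (mul_ne_zero ((map_ne_zero _).mpr hdx) hdy)]
    simp only [map_sub, map_one, map_mul, conj_conj]
    linear_combination -(mobius q y * (1 - conj q * y)) * hconj -
      (conj x - conj q) * mobius_mul_one_sub_conj_mul hdy
  rw [pseudoHyperbolicDist, pseudoHyperbolicDist, hsub, hone, norm_div, norm_div, norm_mul,
    norm_mul, norm_mul, norm_mul, norm_conj,
    div_div_div_cancel_right₀ (by positivity), mul_div_mul_right _ _ (norm_ne_zero_iff.mpr hdq)]

theorem eq_neg_of_pseudoHyperbolicDist_eq {a b : ℂ} (ha : ‖a‖ < 1) (hb : ‖b‖ = ‖a‖)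
    (h : pseudoHyperbolicDist a b = 2 * ‖a‖ / (1 + ‖a‖ ^ 2)) : b = -a := by
  set t := ‖a‖
  have hd : 0 < ‖1 - conj a * b‖ :=
    norm_pos_iff.mpr (one_sub_conj_mul_ne_zero ha (hb.trans_lt ha).le)
  have hsq : ‖a - b‖ ^ 2 * (1 + t ^ 2) ^ 2 = 4 * t ^ 2 * ‖1 - conj a * b‖ ^ 2 := by
    rw [pseudoHyperbolicDist, div_eq_div_iff hd.ne' (by positivity)] at h
    linear_combination (‖a - b‖ * (1 + t ^ 2) + 2 * t * ‖1 - conj a * b‖) * h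
  have hnb : normSq b = t ^ 2 := by rw [normSq_eq_norm_sq, hb]
  have hna : normSq a = t ^ 2 := normSq_eq_norm_sq a
  have hre : (a * conj b).re = -t ^ 2 := by
    simp only [Complex.sq_norm, normSq_sub, map_one, map_mul, normSq_conj, hna, hnb, one_mul,
      conj_conj] at hsq
    have : (1 - t ^ 2) ^ 2 * ((a * conj b).re + t ^ 2) = 0 := by
      linear_combination (-1 / 2 : ℝ) * hsq
    have ht : (1 - t ^ 2) ^ 2 ≠ 0 := pow_ne_zero 2 (by nlinarith [norm_nonneg a])
    linarith [(mul_eq_zero.mp this).resolve_left ht]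
  have : normSq (a + b) = 0 := by rw [normSq_add, hna, hnb, hre]; ring
  linear_combination normSq_eq_zero.mp this

theorem norm_sub_mul_of_antipodal {q a x y : ℂ} (hx : x * (1 + conj q * a) = q + a)
    (hy : y * (1 - conj q * a) = q - a) (hq : ‖q‖ ≤ 1) :
    ‖x - y‖ * (‖1 + conj q * a‖ * ‖1 - conj q * a‖) = 2 * ‖a‖ * (1 - ‖q‖ ^ 2) := by
  have h : (x - y) * ((1 + conj q * a) * (1 - conj q * a)) =
      2 * a * ((1 - ‖q‖ ^ 2 : ℝ) : ℂ) := by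
    push_cast
    linear_combination (1 - conj q * a) * hx - (1 + conj q * a) * hy - 2 * a * conj_mul' q
  have hK : (0 : ℝ) ≤ 1 - ‖q‖ ^ 2 := by nlinarith [norm_nonneg q]
  have := congrArg norm h
  rwa [norm_mul, norm_mul, norm_mul, norm_mul, Complex.norm_two, norm_real,
    Real.norm_of_nonneg hK] at this

theorem two_mul_norm_le_of_antipodal {q a x y z : ℂ} (hx : x * (1 + conj q * a) = q + a)
    (hy : y * (1 - conj q * a) = q - a) (hz : ‖z‖ = 1) :
    2 * ‖((1 - ‖a‖ ^ 2 * ‖q‖ ^ 2 : ℝ) : ℂ) - ((1 - ‖a‖ ^ 2 : ℝ) : ℂ) * (conj q * z)‖ ≤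
      ‖1 + conj q * a‖ * ‖1 - conj q * a‖ * (‖x - z‖ + ‖z - y‖) := by
  have hxc := congrArg conj hx
  have hyc := congrArg conj hy
  simp only [map_mul, map_add, map_sub, map_one, conj_conj] at hxc hyc
  have h : (1 - conj q * a) * conj (1 + conj q * a) * (1 - conj x * z) +
      (1 + conj q * a) * conj (1 - conj q * a) * (1 - conj y * z) =
      2 * (((1 - ‖a‖ ^ 2 * ‖q‖ ^ 2 : ℝ) : ℂ) - ((1 - ‖a‖ ^ 2 : ℝ) : ℂ) * (conj q * z)) := by
    simp only [map_mul, map_add, map_sub, map_one, conj_conj]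
    push_cast
    linear_combination (-(1 - conj q * a) * z) * hxc - ((1 + conj q * a) * z) * hyc +
      (2 * conj q * z - 2 * q * conj q) * mul_conj' a - 2 * (‖a‖ : ℂ) ^ 2 * mul_conj' q
  calc _ = ‖(1 - conj q * a) * conj (1 + conj q * a) * (1 - conj x * z) +
        (1 + conj q * a) * conj (1 - conj q * a) * (1 - conj y * z)‖ := by
        rw [h, norm_mul, Complex.norm_two]
    _ ≤ _ := norm_add_le _ _
    _ = _ := by
      rw [norm_sub_eq_norm_one_sub_conj_mul x hz, norm_sub_rev z y,
        norm_sub_eq_norm_one_sub_conj_mul y hz]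
      simp only [norm_mul, norm_conj]
      ring

theorem norm_sub_le_of_antipodal {q a x y z : ℂ} (hx : x * (1 + conj q * a) = q + a)
    (hy : y * (1 - conj q * a) = q - a) (hq : ‖q‖ < 1) (ha : ‖a‖ ≤ 1) (hz : ‖z‖ = 1) :
    ‖x - y‖ ≤ (1 + ‖q‖) * ‖a‖ / (1 + ‖q‖ * ‖a‖ ^ 2) * (‖x - z‖ + ‖z - y‖) := by
  set K := ‖q‖
  set t := ‖a‖
  have hplus : 1 + conj q * a ≠ 0 := by
    simpa using one_sub_conj_mul_ne_zero (x := -q) (y := a) (by rwa [norm_neg]) ha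
  have hminus : 1 - conj q * a ≠ 0 := one_sub_conj_mul_ne_zero hq ha
  have huv : 0 < ‖1 + conj q * a‖ * ‖1 - conj q * a‖ := by positivity
  have ht : 0 ≤ t := norm_nonneg a
  have hK : 0 ≤ K := norm_nonneg q
  have hW : (1 - K) * (1 + K * t ^ 2) ≤
      ‖((1 - t ^ 2 * K ^ 2 : ℝ) : ℂ) - ((1 - t ^ 2 : ℝ) : ℂ) * (conj q * z)‖ :=
    calc (1 - K) * (1 + K * t ^ 2) = (1 - t ^ 2 * K ^ 2) - (1 - t ^ 2) * K := by ring
      _ = ‖((1 - t ^ 2 * K ^ 2 : ℝ) : ℂ)‖ - ‖((1 - t ^ 2 : ℝ) : ℂ) * (conj q * z)‖ := by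
        rw [norm_real, norm_mul, norm_real, norm_mul, norm_conj, hz, mul_one,
          Real.norm_of_nonneg (by nlinarith [mul_le_one₀ ha hK hq.le, mul_nonneg ht hK]),
          Real.norm_of_nonneg (by nlinarith)]
      _ ≤ _ := norm_sub_norm_le _ _
  rw [div_mul_eq_mul_div, le_div_iff₀ (by positivity)]
  refine le_of_mul_le_mul_right ?_ huv
  calc ‖x - y‖ * (1 + K * t ^ 2) * (‖1 + conj q * a‖ * ‖1 - conj q * a‖)
      = (1 + K) * t * (2 * ((1 - K) * (1 + K * t ^ 2))) := by
        rw [mul_right_comm, norm_sub_mul_of_antipodal hx hy hq.le]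
        ring
    _ ≤ (1 + K) * t * (‖1 + conj q * a‖ * ‖1 - conj q * a‖ * (‖x - z‖ + ‖z - y‖)) := by
        gcongr (1 + K) * t * ?_
        exact (mul_le_mul_of_nonneg_left hW two_pos.le).trans
          (two_mul_norm_le_of_antipodal hx hy hz)
    _ = _ := by ring

end HyperbolicDisk

open HyperbolicDisk

theorem sB_le_of_forall {x y : ℂ} {c : ℝ} (hx : ‖x‖ < 1) (hc : 0 ≤ c)
    (h : ∀ z : ℂ, ‖z‖ = 1 → ‖x - y‖ ≤ c * (‖x - z‖ + ‖z - y‖)) : sB x y ≤ c := by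
  set S := (fun z => ‖x - z‖ + ‖z - y‖) '' {z : ℂ | ‖z‖ = 1}
  have hne : S.Nonempty := ⟨_, 1, by simp, rfl⟩
  have hS : 0 < sInf S := by
    refine (sub_pos.mpr hx).trans_le (le_csInf hne ?_)
    rintro _ ⟨z, hz, rfl⟩
    have := norm_sub_norm_le z x
    rw [show ‖z‖ = 1 from hz, norm_sub_rev] at this
    linarith [norm_nonneg (z - y)]
  rw [sB, div_le_iff₀ hS, ← smul_eq_mul, ← Real.sInf_smul_of_nonneg hc]
  refine le_csInf hne.smul_set ?_
  rintro _ ⟨_, ⟨z, hz, rfl⟩, rfl⟩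
  exact h z hz

theorem stmt_18 (x y q : ℂ) (hx : ‖x‖ < 1) (hy : ‖y‖ < 1)
    (hq : ‖q‖ < 1)
    (hmid1 : rhoB x q = rhoB x y / 2) (hmid2 : rhoB q y = rhoB x y / 2) :
    sB x y ≤ (1 + ‖q‖) * Real.tanh (rhoB x y / 4) /
      (1 + ‖q‖ * Real.tanh (rhoB x y / 4) ^ 2) := by
  set t := Real.tanh (rhoB x y / 4)
  have ha : ‖mobius q x‖ = t := by
    rw [norm_mobius, pseudoHyperbolicDist_comm, ← tanh_half_rhoB hx hq, hmid1, div_div]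
    norm_num [t]
  have hb : ‖mobius q y‖ = t := by
    rw [norm_mobius, ← tanh_half_rhoB hq hy, hmid2, div_div]
    norm_num [t]
  have hab : pseudoHyperbolicDist (mobius q x) (mobius q y) = 2 * t / (1 + t ^ 2) := by
    rw [pseudoHyperbolicDist_mobius hq hx.le hy.le, ← tanh_half_rhoB hx hy, ← Real.tanh_two_mul]
    ring_nf
  have ht : t < 1 := Real.tanh_lt_one _
  have hba := eq_neg_of_pseudoHyperbolicDist_eq (ha ▸ ht) (hb.trans ha.symm) (ha ▸ hab)
  have hxa := mobius_mul_one_sub_conj_mul (one_sub_conj_mul_ne_zero hq hx.le)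
  have hyb := mobius_mul_one_sub_conj_mul (one_sub_conj_mul_ne_zero hq hy.le)
  rw [hba] at hyb
  rw [← ha]
  refine sB_le_of_forall hx (by positivity) fun z hz => ?_
  exact norm_sub_le_of_antipodal (by linear_combination -hxa) (by linear_combination -hyb) hq
    (ha ▸ ht.le) hz
end

section
/- If f : B² → B² is a K-quasiconformal homeomorphism of the unit disk onto itself with K ≥ 1, then for all x, y ∈ B², |f(x) − f(y)| ≤ 2^{3−1/K} · ( s_{B²}(x,y)/(1 + s_{B²}(x,y)²) )^{1/K}. -/
/-- `f` is a `K`-quasiconformal homeomorphism of the unit disk onto itself: we record the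
properties of such maps used in the proof, namely that `f` maps the disk bijectively onto
itself and satisfies the quasiconformal Schwarz lemma
`tanh(ρ(f x, f y)/2) ≤ φ_K(tanh(ρ(x,y)/2)) ≤ 4^{1−1/K}·tanh(ρ(x,y)/2)^{1/K}`. -/
structure IsKQuasiconformalDiskMap (K : ℝ) (f : ℂ → ℂ) : Prop where
  mapsTo : ∀ x : ℂ, ‖x‖ < 1 → ‖f x‖ < 1
  bijOn : Set.BijOn f {z : ℂ | ‖z‖ < 1} {z : ℂ | ‖z‖ < 1}
  continuousOn : ContinuousOn f {z : ℂ | ‖z‖ < 1}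
  schwarz : ∀ x y : ℂ, ‖x‖ < 1 → ‖y‖ < 1 →
    Real.tanh (rhoB (f x) (f y) / 2) ≤
      (4 : ℝ) ^ (1 - 1 / K) * Real.tanh (rhoB x y / 2) ^ (1 / K : ℝ)

/-!
Everything is reduced to planar inequalities through the pseudo-hyperbolic form
`tanh (ρ(u, v) / 2) = |u - v| / |1 - u v̄|`. On the image side `|1 - u v̄| ≤ 2`, so
`|f x - f y| ≤ 2 tanh (ρ(f x, f y) / 2)`. On the domain side the denominator `I` of `s(x, y)`
satisfies `|1 - x ȳ| ≤ I ≤ |1 - x ȳ| + √((1 - |x|²)(1 - |y|²))`, the upper bound by testing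
the radial projection of whichever of `x`, `y` is farther from `0`; since
`|1 - x ȳ|² = |x - y|² + (1 - |x|²)(1 - |y|²)` this is exactly `tanh (ρ(x, y) / 2) ≤ 2s / (1 + s²)`.
The quasiconformal Schwarz lemma links the two sides.
-/

open Complex ComplexConjugate

lemma mul_sq_sub_le_mul_sq_sub {a b q : ℝ} (hb : 0 ≤ b) (hba : b ≤ a) (ha : a ≤ 1)
    (hq : 2 - b ≤ q) :
    (1 - a) * (1 + b) * (q - b) ^ 2 ≤ (1 + a) * (1 - b) * (q - a) ^ 2 := by
  -- Taylor expansion of the difference at `q = 2 - b`, where it and its derivative are `≥ 0`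
  have key : (1 + a) * (1 - b) * (q - a) ^ 2 - (1 - a) * (1 + b) * (q - b) ^ 2 =
      (a - b) * ((1 - b) * ((1 + a) * (a - b) + 4 * (1 - a) * (1 - b)) +
        2 * (1 - b) * (3 - a) * (q - (2 - b)) + 2 * (q - (2 - b)) ^ 2) := by ring
  have h1b : 0 ≤ 1 - b := by linarith
  have hq' : 0 ≤ q - (2 - b) := by linarith
  have hvalue : 0 ≤ (1 - b) * ((1 + a) * (a - b) + 4 * (1 - a) * (1 - b)) :=
    mul_nonneg h1b (add_nonneg (mul_nonneg (by linarith) (sub_nonneg.2 hba))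
      (mul_nonneg (mul_nonneg (by norm_num) (by linarith)) h1b))
  have hslope : 0 ≤ 2 * (1 - b) * (3 - a) * (q - (2 - b)) :=
    mul_nonneg (mul_nonneg (mul_nonneg zero_le_two h1b) (by linarith)) hq'
  rw [← sub_nonneg, key]
  exact mul_nonneg (sub_nonneg.2 hba) (by linarith [sq_nonneg (q - (2 - b))])

lemma one_sub_add_le_add_of_sq_eq {a b l s t : ℝ} (hb : 0 ≤ b) (hba : b ≤ a) (ha : a ≤ 1)
    (hl : 1 - b ≤ l) (hl' : l ≤ 1 + b) (hs : 0 ≤ s) (ht : 0 ≤ t)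
    (hs2 : s ^ 2 = (1 - a) * (1 - a * b ^ 2) + a * l ^ 2)
    (ht2 : t ^ 2 = (1 - a ^ 2) * (1 - b ^ 2)) :
    1 - a + l ≤ s + t := by
  have ha0 : 0 ≤ a := hb.trans hba
  rcases le_or_gt l t with hlt | htl
  · have : (1 - a) ^ 2 ≤ s ^ 2 := by
      rw [hs2]
      nlinarith [mul_nonneg (sub_nonneg.2 ha) (mul_nonneg ha0 (by nlinarith : 0 ≤ 1 - b ^ 2)),
        mul_nonneg ha0 (sq_nonneg l)]
    linarith [abs_le_of_sq_le_sq' this hs]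
  · have hsq : ((1 - a) * ((l + 1) ^ 2 - b ^ 2)) ^ 2 ≤ (2 * t * (l + 1 - a)) ^ 2 :=
      calc ((1 - a) * ((l + 1) ^ 2 - b ^ 2)) ^ 2
          = (1 - a) ^ 2 * (l + 1 - b) ^ 2 * (l + 1 + b) ^ 2 := by ring
        _ ≤ (1 - a) ^ 2 * (l + 1 - b) ^ 2 * (2 * (1 + b)) ^ 2 :=
          mul_le_mul_of_nonneg_left (pow_le_pow_left₀ (by linarith) (by linarith) 2)
            (by positivity)
        _ = 4 * ((1 - a) * (1 + b)) * ((1 - a) * (1 + b) * (l + 1 - b) ^ 2) := by ring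
        _ ≤ 4 * ((1 - a) * (1 + b)) * ((1 + a) * (1 - b) * (l + 1 - a) ^ 2) :=
          mul_le_mul_of_nonneg_left (mul_sq_sub_le_mul_sq_sub hb hba ha (by linarith))
            (by nlinarith)
        _ = (2 * t * (l + 1 - a)) ^ 2 := by rw [mul_pow, mul_pow, ht2]; ring
    have hkey : (1 - a) * ((l + 1) ^ 2 - b ^ 2) ≤ 2 * t * (l + 1 - a) :=
      abs_le_of_sq_le_sq' hsq (by nlinarith) |>.2
    have hdiff : s ^ 2 - (1 - a + (l - t)) ^ 2 =
        2 * t * (l + 1 - a) - (1 - a) * ((l + 1) ^ 2 - b ^ 2) := by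
      linear_combination hs2 - ht2
    have : (1 - a + (l - t)) ^ 2 ≤ s ^ 2 := by linarith
    linarith [abs_le_of_sq_le_sq' this hs]

lemma div_le_two_mul_div_one_add_sq {d A I t : ℝ} (hd : 0 ≤ d) (hA : 0 < A) (hAI : A ≤ I)
    (hIA : I ≤ A + t) (hAt : A ^ 2 = d ^ 2 + t ^ 2) :
    d / A ≤ 2 * (d / I / (1 + (d / I) ^ 2)) := by
  have hI : 0 < I := hA.trans_le hAI
  -- `(I - A) ^ 2 ≤ t ^ 2 = A ^ 2 - d ^ 2`
  have hsq : I ^ 2 + d ^ 2 ≤ 2 * A * I := by nlinarith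
  rw [show d / I / (1 + (d / I) ^ 2) = d * I / (I ^ 2 + d ^ 2) by field_simp, ← mul_div_assoc,
    div_le_div_iff₀ hA (by positivity)]
  nlinarith [mul_le_mul_of_nonneg_left hsq hd]

lemma two_mul_four_rpow_mul_two_mul_rpow (κ : ℝ) {w : ℝ} (hw : 0 ≤ w) :
    2 * ((4 : ℝ) ^ (1 - κ) * (2 * w) ^ κ) = (2 : ℝ) ^ (3 - κ) * w ^ κ := by
  have h4 : (4 : ℝ) ^ (1 - κ) = 2 ^ (2 - 2 * κ) := by
    rw [show (4 : ℝ) = 2 ^ (2 : ℝ) by norm_num, ← Real.rpow_mul zero_le_two]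
    ring_nf
  rw [Real.mul_rpow zero_le_two hw, h4, show 3 - κ = 1 + (2 - 2 * κ) + κ by ring,
    Real.rpow_add two_pos, Real.rpow_add two_pos, Real.rpow_one]
  ring

lemma norm_one_sub_mul_conj_sq (u v : ℂ) :
    ‖1 - u * conj v‖ ^ 2 = ‖u - v‖ ^ 2 + (1 - ‖u‖ ^ 2) * (1 - ‖v‖ ^ 2) := by
  simp only [Complex.sq_norm, Complex.normSq_apply, Complex.sub_re, Complex.sub_im,
    Complex.mul_re, Complex.mul_im, Complex.conj_re, Complex.conj_im, Complex.one_re,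
    Complex.one_im]
  ring

lemma norm_one_sub_mul_conj_comm (u v : ℂ) : ‖1 - u * conj v‖ = ‖1 - v * conj u‖ := by
  rw [← Complex.norm_conj, map_sub, map_one, map_mul, Complex.conj_conj, mul_comm]

lemma norm_one_sub_mul_conj_pos {u v : ℂ} (hu : ‖u‖ < 1) (hv : ‖v‖ < 1) :
    0 < ‖1 - u * conj v‖ := by
  have huv : ‖u * conj v‖ < 1 := by
    rw [norm_mul, Complex.norm_conj]
    nlinarith [norm_nonneg u, norm_nonneg v]
  have := norm_sub_norm_le (1 : ℂ) (u * conj v)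
  rw [norm_one] at this
  linarith

lemma tanh_rhoB_half {u v : ℂ} (hu : ‖u‖ < 1) (hv : ‖v‖ < 1) :
    Real.tanh (rhoB u v / 2) = ‖u - v‖ / ‖1 - u * conj v‖ := by
  have hC : 0 < (1 - ‖u‖ ^ 2) * (1 - ‖v‖ ^ 2) :=
    mul_pos (by nlinarith [norm_nonneg u]) (by nlinarith [norm_nonneg v])
  have hA : ‖1 - u * conj v‖ = √(‖u - v‖ ^ 2 + (1 - ‖u‖ ^ 2) * (1 - ‖v‖ ^ 2)) := by
    rw [← norm_one_sub_mul_conj_sq, Real.sqrt_sq (norm_nonneg _)]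
  rw [rhoB, mul_div_cancel_left₀ _ two_ne_zero, Real.tanh_arsinh, hA, div_pow,
    Real.sq_sqrt hC.le, one_add_div hC.ne', Real.sqrt_div' _ hC.le, div_div_div_cancel_right₀
      (Real.sqrt_pos.2 hC).ne', add_comm]

lemma norm_sub_le_two_mul_tanh_rhoB_half {u v : ℂ} (hu : ‖u‖ < 1) (hv : ‖v‖ < 1) :
    ‖u - v‖ ≤ 2 * Real.tanh (rhoB u v / 2) := by
  have hA : ‖1 - u * conj v‖ ≤ 2 :=
    calc ‖1 - u * conj v‖ ≤ ‖(1 : ℂ)‖ + ‖u * conj v‖ := norm_sub_le _ _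
      _ ≤ 2 := by
        rw [norm_one, norm_mul, Complex.norm_conj]
        nlinarith [norm_nonneg u, norm_nonneg v]
  rw [tanh_rhoB_half hu hv, mul_div_assoc', le_div_iff₀ (norm_one_sub_mul_conj_pos hu hv)]
  nlinarith [mul_le_mul_of_nonneg_left hA (norm_nonneg (u - v))]

noncomputable def circleDetour (x y : ℂ) : ℝ :=
  sInf ((fun z => ‖x - z‖ + ‖z - y‖) '' {z : ℂ | ‖z‖ = 1})

lemma sB_eq_div (x y : ℂ) : sB x y = ‖x - y‖ / circleDetour x y := rfl

lemma circleDetour_comm (x y : ℂ) : circleDetour x y = circleDetour y x := by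
  have : (fun z : ℂ => ‖x - z‖ + ‖z - y‖) = fun z => ‖y - z‖ + ‖z - x‖ :=
    funext fun z => by rw [norm_sub_rev x, norm_sub_rev z y, add_comm]
  rw [circleDetour, circleDetour, this]

lemma circleDetour_le {x y z : ℂ} (hz : ‖z‖ = 1) : circleDetour x y ≤ ‖x - z‖ + ‖z - y‖ :=
  csInf_le ⟨0, Set.forall_mem_image.2 fun _ _ => by positivity⟩ (Set.mem_image_of_mem _ hz)

lemma le_circleDetour {x y : ℂ} {r : ℝ} (h : ∀ z : ℂ, ‖z‖ = 1 → r ≤ ‖x - z‖ + ‖z - y‖) :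
    r ≤ circleDetour x y :=
  le_csInf ⟨_, Set.mem_image_of_mem _ (norm_one : ‖(1 : ℂ)‖ = 1)⟩ (Set.forall_mem_image.2 h)

lemma circleDetour_nonneg (x y : ℂ) : 0 ≤ circleDetour x y :=
  Real.sInf_nonneg (Set.forall_mem_image.2 fun _ _ => by positivity)

lemma sB_nonneg (x y : ℂ) : 0 ≤ sB x y :=
  div_nonneg (norm_nonneg _) (circleDetour_nonneg x y)

lemma norm_one_sub_mul_conj_le_of_norm_eq_one {x y z : ℂ} (hx : ‖x‖ ≤ 1) (hz : ‖z‖ = 1) :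
    ‖1 - x * conj y‖ ≤ ‖x - z‖ + ‖z - y‖ := by
  have hzz : z * conj z = 1 := by rw [Complex.mul_conj, Complex.normSq_eq_norm_sq, hz]; norm_num
  have : 1 - x * conj y = (z - x) * conj z + x * conj (z - y) := by
    rw [map_sub]; linear_combination -hzz
  calc ‖1 - x * conj y‖ ≤ ‖z - x‖ * ‖conj z‖ + ‖x‖ * ‖conj (z - y)‖ := by
        rw [this, ← norm_mul, ← norm_mul]; exact norm_add_le _ _
    _ ≤ ‖x - z‖ + ‖z - y‖ := by
        rw [Complex.norm_conj, Complex.norm_conj, hz, mul_one, norm_sub_rev z x]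
        nlinarith [norm_nonneg (z - y)]

lemma norm_one_sub_mul_conj_le_circleDetour {x : ℂ} (y : ℂ) (hx : ‖x‖ ≤ 1) :
    ‖1 - x * conj y‖ ≤ circleDetour x y :=
  le_circleDetour fun _ hz => norm_one_sub_mul_conj_le_of_norm_eq_one hx hz

lemma norm_one_sub_ofReal_mul_mul_conj_sq {z : ℂ} (hz : ‖z‖ = 1) (a : ℝ) (y : ℂ) :
    ‖1 - a * z * conj y‖ ^ 2 = (1 - a) * (1 - a * ‖y‖ ^ 2) + a * ‖z - y‖ ^ 2 := by
  have hz2 : ‖z‖ ^ 2 = 1 := by rw [hz, one_pow]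
  rw [Complex.sq_norm, Complex.normSq_apply] at hz2
  simp only [Complex.sq_norm, Complex.normSq_apply, Complex.sub_re, Complex.sub_im,
    Complex.mul_re, Complex.mul_im, Complex.conj_re, Complex.conj_im, Complex.one_re,
    Complex.one_im, Complex.ofReal_re, Complex.ofReal_im]
  linear_combination (a ^ 2 * (y.re * y.re + y.im * y.im) - a) * hz2

lemma circleDetour_le_of_norm_le {x y : ℂ} (hx : ‖x‖ ≤ 1) (hyx : ‖y‖ ≤ ‖x‖) :
    circleDetour x y ≤ ‖1 - x * conj y‖ + √((1 - ‖x‖ ^ 2) * (1 - ‖y‖ ^ 2)) := by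
  -- the radial projection of `x` (an arbitrary point of the circle when `x = 0`)
  set z := exp (arg x * I)
  have hz : ‖z‖ = 1 := norm_exp_ofReal_mul_I _
  have hxz : x = ‖x‖ * z := (norm_mul_exp_arg_mul_I x).symm
  have hdist : ‖x - z‖ = 1 - ‖x‖ := by
    rw [show x - z = (‖x‖ - 1 : ℝ) * z by nth_rw 1 [hxz]; push_cast; ring, norm_mul, hz, mul_one,
      Complex.norm_real, Real.norm_eq_abs, abs_of_nonpos (by linarith)]
    ring
  have hl := norm_sub_norm_le z y
  have hl' := norm_sub_le z y
  rw [hz] at hl hl'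
  refine (circleDetour_le hz).trans ?_
  rw [hdist]
  refine one_sub_add_le_add_of_sq_eq (norm_nonneg y) hyx hx hl hl' (norm_nonneg _)
    (Real.sqrt_nonneg _) ?_ (Real.sq_sqrt ?_)
  · conv_lhs => rw [hxz]
    exact norm_one_sub_ofReal_mul_mul_conj_sq hz _ y
  · exact mul_nonneg (by nlinarith [norm_nonneg x]) (by nlinarith [norm_nonneg y])

lemma tanh_rhoB_half_le_sB {x y : ℂ} (hx : ‖x‖ < 1) (hy : ‖y‖ < 1) :
    Real.tanh (rhoB x y / 2) ≤ 2 * (sB x y / (1 + sB x y ^ 2)) := by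
  have hC : 0 ≤ (1 - ‖x‖ ^ 2) * (1 - ‖y‖ ^ 2) :=
    mul_nonneg (by nlinarith [norm_nonneg x]) (by nlinarith [norm_nonneg y])
  have hupper : circleDetour x y ≤ ‖1 - x * conj y‖ + √((1 - ‖x‖ ^ 2) * (1 - ‖y‖ ^ 2)) := by
    rcases le_total ‖y‖ ‖x‖ with hyx | hxy
    · exact circleDetour_le_of_norm_le hx.le hyx
    · rw [circleDetour_comm, norm_one_sub_mul_conj_comm, mul_comm (1 - ‖x‖ ^ 2)]
      exact circleDetour_le_of_norm_le hy.le hxy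
  rw [tanh_rhoB_half hx hy, sB_eq_div]
  exact div_le_two_mul_div_one_add_sq (norm_nonneg _) (norm_one_sub_mul_conj_pos hx hy)
    (norm_one_sub_mul_conj_le_circleDetour y hx.le) hupper
    (by rw [norm_one_sub_mul_conj_sq, Real.sq_sqrt hC])

theorem stmt_19 (K : ℝ) (hK : 1 ≤ K) (f : ℂ → ℂ) (hf : IsKQuasiconformalDiskMap K f)
    (x y : ℂ) (hx : ‖x‖ < 1) (hy : ‖y‖ < 1) :
    ‖f x - f y‖ ≤
      (2 : ℝ) ^ (3 - 1 / K) * (sB x y / (1 + sB x y ^ 2)) ^ (1 / K : ℝ) := by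
  have hK' : 0 ≤ 1 / K := one_div_nonneg.2 (zero_le_one.trans hK)
  have htanh : 0 ≤ Real.tanh (rhoB x y / 2) := by
    rw [tanh_rhoB_half hx hy]; positivity
  calc ‖f x - f y‖ ≤ 2 * Real.tanh (rhoB (f x) (f y) / 2) :=
        norm_sub_le_two_mul_tanh_rhoB_half (hf.mapsTo x hx) (hf.mapsTo y hy)
    _ ≤ 2 * ((4 : ℝ) ^ (1 - 1 / K) * Real.tanh (rhoB x y / 2) ^ (1 / K : ℝ)) := by
        gcongr; exact hf.schwarz x y hx hy
    _ ≤ 2 * ((4 : ℝ) ^ (1 - 1 / K) * (2 * (sB x y / (1 + sB x y ^ 2))) ^ (1 / K : ℝ)) := by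
        gcongr; exact tanh_rhoB_half_le_sB hx hy
    _ = (2 : ℝ) ^ (3 - 1 / K) * (sB x y / (1 + sB x y ^ 2)) ^ (1 / K : ℝ) :=
        two_mul_four_rpow_mul_two_mul_rpow _ (div_nonneg (sB_nonneg x y) (by positivity))
end
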